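/- arXiv:2506.08164 — 4 statements merged into one kernel-verified Lean document; each statement's English description precedes it below -/
import Mathlib

section
/- If C > 0 is a constant such that ‖∇r(θ)‖ ≤ C, then for every θ with ∇f(θ) ≠ 0 one has ⟪∇r(θ), u(θ)⟫ ≥ ‖u(θ)‖² − γ²‖∇f(θ)‖² − C·γ·‖∇f(θ)‖. -/
open scoped RealInnerProductSpace

/-- The BLUR update direction
`u(θ) = γ·∇f(θ) + ∇r(θ) − (⟪∇f(θ), ∇r(θ)⟫/‖∇f(θ)‖²)·∇f(θ)`. -/
noncomputable def blurU {d : ℕ} (f r : EuclideanSpace ℝ (Fin d) → ℝ) (γ : ℝ)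
    (θ : EuclideanSpace ℝ (Fin d)) : EuclideanSpace ℝ (Fin d) :=
  γ • gradient f θ + gradient r θ -
    (⟪gradient f θ, gradient r θ⟫ / ‖gradient f θ‖ ^ 2) • gradient f θ

/-- `ξ(θ) = (γ‖∇f(θ)‖² − ⟪∇f(θ), ∇r(θ)⟫)/‖∇f(θ)‖²`, so that
`u(θ) = ξ(θ)·∇f(θ) + ∇r(θ)`. -/
noncomputable def blurXi {d : ℕ} (f r : EuclideanSpace ℝ (Fin d) → ℝ) (γ : ℝ)
    (θ : EuclideanSpace ℝ (Fin d)) : ℝ :=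
  (γ * ‖gradient f θ‖ ^ 2 - ⟪gradient f θ, gradient r θ⟫) / ‖gradient f θ‖ ^ 2

/-- Lemma 1(e): if `‖∇r(θ)‖ ≤ C` with `C > 0`, then for every `θ` with `∇f(θ) ≠ 0`,
`⟪∇r(θ), u(θ)⟫ ≥ ‖u(θ)‖² − γ²‖∇f(θ)‖² − Cγ‖∇f(θ)‖`. -/
theorem blur_inner_gradr_u_ge (d : ℕ) (hd : 0 < d) (f r : EuclideanSpace ℝ (Fin d) → ℝ)
    (hf : Differentiable ℝ f) (hr : Differentiable ℝ r) (γ : ℝ) (hγ : 0 < γ)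
    (C : ℝ) (hC : 0 < C)
    (hgr : ∀ θ : EuclideanSpace ℝ (Fin d), ‖gradient r θ‖ ≤ C)
    (θ : EuclideanSpace ℝ (Fin d)) (hθ : gradient f θ ≠ 0) :
    ⟪gradient r θ, blurU f r γ θ⟫ ≥
      ‖blurU f r γ θ‖ ^ 2 - γ ^ 2 * ‖gradient f θ‖ ^ 2 - C * γ * ‖gradient f θ‖ := by
  set g := gradient f θ with hg
  set h := gradient r θ with hh
  set ξ : ℝ := γ - ⟪g, h⟫ / ‖g‖ ^ 2 with hξ
  have hg2 : ‖g‖ ^ 2 ≠ 0 := pow_ne_zero 2 (norm_ne_zero_iff.mpr hθ)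
  have hu : blurU f r γ θ = ξ • g + h := by
    simp only [blurU, ← hg, ← hh, hξ, sub_smul]
    module
  set u := blurU f r γ θ with hudef
  have hgu : ⟪g, u⟫ = γ * ‖g‖ ^ 2 := by
    rw [hu, inner_add_right, real_inner_smul_right, real_inner_self_eq_norm_sq]
    rw [hξ, sub_mul, div_mul_cancel₀ _ hg2]; ring
  have hhu : ⟪h, u⟫ = ‖u‖ ^ 2 - ξ * (γ * ‖g‖ ^ 2) := by
    have : h = u - ξ • g := by rw [hu]; abel
    rw [this, inner_sub_left, real_inner_smul_left, real_inner_self_eq_norm_sq, hgu]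
  have hcs : ⟪g, h⟫ ≥ -(C * ‖g‖) := by
    have := abs_real_inner_le_norm g h
    have h2 : ‖g‖ * ‖h‖ ≤ ‖g‖ * C := by
      exact mul_le_mul_of_nonneg_left (hgr θ) (norm_nonneg g)
    nlinarith [neg_abs_le (⟪g, h⟫ : ℝ)]
  have hξγ : ξ * (γ * ‖g‖ ^ 2) = γ ^ 2 * ‖g‖ ^ 2 - γ * ⟪g, h⟫ := by
    rw [hξ, show (γ - ⟪g, h⟫ / ‖g‖ ^ 2) * (γ * ‖g‖ ^ 2) = γ ^ 2 * ‖g‖ ^ 2 - γ * (⟪g, h⟫ / ‖g‖ ^ 2 * ‖g‖ ^ 2) by ring, div_mul_cancel₀ _ hg2]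
  have : γ * ⟪g, h⟫ ≥ -(C * γ * ‖g‖) := by nlinarith
  rw [hhu, hξγ]
  linarith
end

section
/- Suppose ∇f is L_f-Lipschitz on EuclideanSpace ℝ (Fin d) and C > 0 satisfies ‖∇f(θ)‖ ≤ C and ‖∇r(θ)‖ ≤ C at a point θ with ∇f(θ) ≠ 0. Then for every step size η > 0, f(θ − η·u(θ)) − f(θ) ≤ −η·γ·‖∇f(θ)‖² + (L_f/2)·η²·((2+γ)C)². -/
open scoped RealInnerProductSpace

lemma descent_aux {d : ℕ} (f : EuclideanSpace ℝ (Fin d) → ℝ)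
    (hf : Differentiable ℝ f) (Lf : ℝ) (hLf : 0 ≤ Lf)
    (hlipf : ∀ x y : EuclideanSpace ℝ (Fin d),
      ‖gradient f x - gradient f y‖ ≤ Lf * ‖x - y‖)
    (x v : EuclideanSpace ℝ (Fin d)) :
    f (x + v) - f x ≤ ⟪gradient f x, v⟫ + Lf / 2 * ‖v‖ ^ 2 := by
  have hgc : Continuous (gradient f) := by
    refine (LipschitzWith.of_dist_le_mul (K := Lf.toNNReal) fun a b => ?_).continuous
    simpa [dist_eq_norm, Real.coe_toNNReal _ hLf] using hlipf a b
  have hcurve : Continuous (fun t : ℝ => x + t • v) :=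
    continuous_const.add (continuous_id.smul continuous_const)
  set g' : ℝ → ℝ := fun t => ⟪gradient f (x + t • v), v⟫ with hg'
  have hderiv : ∀ t : ℝ, HasDerivAt (fun t : ℝ => f (x + t • v)) (g' t) t := by
    intro t
    have hc : HasDerivAt (fun t : ℝ => x + t • v) v t := by
      simpa using ((hasDerivAt_id t).smul_const v).const_add x
    have := ((hf (x + t • v)).hasGradientAt.hasFDerivAt).comp_hasDerivAt t hc
    simp only [InnerProductSpace.toDual_apply_apply] at this; exact this
  have hcont : Continuous g' := ((hgc.comp hcurve).inner continuous_const)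
  have hftc : f (x + v) - f x = ∫ t in (0:ℝ)..1, g' t := by
    have := intervalIntegral.integral_eq_sub_of_hasDerivAt
      (f := fun t : ℝ => f (x + t • v)) (f' := g')
      (a := 0) (b := 1) (fun t _ => hderiv t)
      (hcont.intervalIntegrable 0 1)
    simpa using this.symm
  have hbound : ∀ t ∈ Set.Icc (0:ℝ) 1,
      g' t ≤ ⟪gradient f x, v⟫ + Lf * ‖v‖ ^ 2 * t := by
    intro t ht
    have h1 : g' t - ⟪gradient f x, v⟫ = ⟪gradient f (x + t • v) - gradient f x, v⟫ := by
      simp [hg', inner_sub_left]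
    have h2 : ⟪gradient f (x + t • v) - gradient f x, v⟫ ≤
        ‖gradient f (x + t • v) - gradient f x‖ * ‖v‖ := real_inner_le_norm _ _
    have h3 : ‖gradient f (x + t • v) - gradient f x‖ ≤ Lf * (t * ‖v‖) := by
      have := hlipf (x + t • v) x
      simpa [norm_smul, abs_of_nonneg ht.1] using this
    nlinarith [norm_nonneg v, mul_le_mul_of_nonneg_right h3 (norm_nonneg v)]
  have hintle : (∫ t in (0:ℝ)..1, g' t) ≤
      ∫ t in (0:ℝ)..1, (⟪gradient f x, v⟫ + Lf * ‖v‖ ^ 2 * t) := by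
    refine intervalIntegral.integral_mono_on zero_le_one
      (hcont.intervalIntegrable 0 1) ?_ hbound
    exact (continuous_const.add (continuous_const.mul continuous_id)).intervalIntegrable 0 1
  have hval : (∫ t in (0:ℝ)..1, (⟪gradient f x, v⟫ + Lf * ‖v‖ ^ 2 * t)) =
      ⟪gradient f x, v⟫ + Lf / 2 * ‖v‖ ^ 2 := by
    have : (∫ t in (0:ℝ)..1, (⟪gradient f x, v⟫ + Lf * ‖v‖ ^ 2 * t)) =
        (∫ t in (0:ℝ)..1, (⟪gradient f x, v⟫ : ℝ)) + ∫ t in (0:ℝ)..1, Lf * ‖v‖ ^ 2 * t := by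
      exact intervalIntegral.integral_add intervalIntegrable_const
        ((continuous_const.mul continuous_id).intervalIntegrable 0 1)
    rw [this, intervalIntegral.integral_const_mul, integral_id]
    simp; ring
  linarith [hftc ▸ hintle.trans_eq hval]
/-- Per-step forget-loss descent inequality from the proof of Theorem 1: if `∇f` is
`L_f`-Lipschitz and `‖∇f(θ)‖ ≤ C`, `‖∇r(θ)‖ ≤ C` at a point `θ` with `∇f(θ) ≠ 0`,
then for every step size `η > 0`,
`f(θ − η·u(θ)) − f(θ) ≤ −ηγ‖∇f(θ)‖² + (L_f/2)·η²·((2+γ)C)²`. -/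
theorem blur_forget_descent (d : ℕ) (hd : 0 < d) (f r : EuclideanSpace ℝ (Fin d) → ℝ)
    (hf : Differentiable ℝ f) (hr : Differentiable ℝ r) (γ : ℝ) (hγ : 0 < γ)
    (Lf : ℝ) (hLf : 0 < Lf)
    (hlipf : ∀ x y : EuclideanSpace ℝ (Fin d),
      ‖gradient f x - gradient f y‖ ≤ Lf * ‖x - y‖)
    (C : ℝ) (hC : 0 < C)
    (θ : EuclideanSpace ℝ (Fin d)) (hθ : gradient f θ ≠ 0)
    (hgf : ‖gradient f θ‖ ≤ C) (hgr : ‖gradient r θ‖ ≤ C)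
    (η : ℝ) (hη : 0 < η) :
    f (θ - η • blurU f r γ θ) - f θ ≤
      -η * γ * ‖gradient f θ‖ ^ 2 + Lf / 2 * η ^ 2 * ((2 + γ) * C) ^ 2 := by
  set G := gradient f θ with hG
  set R := gradient r θ with hR
  set u := blurU f r γ θ with hu
  have hGsq : ‖G‖ ^ 2 ≠ 0 := pow_ne_zero 2 (norm_ne_zero_iff.mpr hθ)
  -- inner product with G
  have hinner : ⟪G, u⟫ = γ * ‖G‖ ^ 2 := by
    simp only [hu, blurU, ← hG, ← hR, inner_add_right, inner_sub_right, inner_smul_right,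
      real_inner_self_eq_norm_sq]
    field_simp; ring
  -- norm bound on u
  have hprojnorm : ‖(⟪G, R⟫ / ‖G‖ ^ 2) • G‖ ≤ C := by
    have h1 : |⟪G, R⟫| ≤ ‖G‖ * ‖R‖ := abs_real_inner_le_norm G R
    have hGpos : 0 < ‖G‖ := norm_pos_iff.mpr hθ
    rw [norm_smul, Real.norm_eq_abs, abs_div, abs_of_nonneg (by positivity : (0:ℝ) ≤ ‖G‖ ^ 2)]
    calc |⟪G, R⟫| / ‖G‖ ^ 2 * ‖G‖ = |⟪G, R⟫| / ‖G‖ := by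
          field_simp
      _ ≤ ‖G‖ * ‖R‖ / ‖G‖ := by gcongr
      _ = ‖R‖ := by field_simp
      _ ≤ C := hgr
  have hunorm : ‖u‖ ≤ (2 + γ) * C := by
    have := norm_sub_le (γ • G + R) ((⟪G, R⟫ / ‖G‖ ^ 2) • G)
    have h2 := norm_add_le (γ • G) R
    have h3 : ‖γ • G‖ = γ * ‖G‖ := by
      rw [norm_smul, Real.norm_eq_abs, abs_of_pos hγ]
    have h4 : γ * ‖G‖ ≤ γ * C := by gcongr
    calc ‖u‖ ≤ ‖γ • G + R‖ + ‖(⟪G, R⟫ / ‖G‖ ^ 2) • G‖ := this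
      _ ≤ (‖γ • G‖ + ‖R‖) + C := by gcongr
      _ ≤ (γ * C + C) + C := by rw [h3]; gcongr
      _ = (2 + γ) * C := by ring
  -- apply descent
  have hdesc := descent_aux f hf Lf hLf.le hlipf θ (-(η • u))
  have heq : θ + -(η • u) = θ - η • u := by abel
  rw [heq] at hdesc
  have hinner2 : ⟪G, -(η • u)⟫ = -η * γ * ‖G‖ ^ 2 := by
    rw [inner_neg_right, real_inner_smul_right, hinner]; ring
  have hnorm2 : ‖-(η • u)‖ ^ 2 ≤ η ^ 2 * ((2 + γ) * C) ^ 2 := by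
    rw [norm_neg, norm_smul, mul_pow, Real.norm_eq_abs, sq_abs]
    have h0 : 0 ≤ ‖u‖ := norm_nonneg u
    have h1 : ‖u‖ ^ 2 ≤ ((2 + γ) * C) ^ 2 := by nlinarith
    have h2 : (0:ℝ) ≤ η ^ 2 := sq_nonneg η
    nlinarith
  have hfinal : Lf / 2 * ‖-(η • u)‖ ^ 2 ≤ Lf / 2 * (η ^ 2 * ((2 + γ) * C) ^ 2) := by
    gcongr
  calc f (θ - η • u) - f θ ≤ ⟪G, -(η • u)⟫ + Lf / 2 * ‖-(η • u)‖ ^ 2 := hdesc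
    _ ≤ -η * γ * ‖G‖ ^ 2 + Lf / 2 * (η ^ 2 * ((2 + γ) * C) ^ 2) := by
        rw [hinner2]; linarith
    _ = -η * γ * ‖G‖ ^ 2 + Lf / 2 * η ^ 2 * ((2 + γ) * C) ^ 2 := by ring
end

section
/- Suppose ∇r is L_r-Lipschitz on EuclideanSpace ℝ (Fin d), C > 0 satisfies ‖∇r(θ)‖ ≤ C at a point θ with ∇f(θ) ≠ 0, and the step size satisfies 0 < η ≤ 1/L_r. Then r(θ − η·u(θ)) − r(θ) ≤ −(η/2)·‖u(θ)‖² + η·(γ²‖∇f(θ)‖² + C·γ·‖∇f(θ)‖). -/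
open scoped RealInnerProductSpace

variable {E : Type*} [NormedAddCommGroup E] [InnerProductSpace ℝ E] [CompleteSpace E]

lemma descent_aux_s8 (r : E → ℝ) (hr : Differentiable ℝ r) (L : ℝ) (hL : 0 ≤ L)
    (hlip : ∀ x y : E, ‖gradient r x - gradient r y‖ ≤ L * ‖x - y‖) (x v : E) :
    r (x + v) - r x ≤ ⟪gradient r x, v⟫ + L / 2 * ‖v‖ ^ 2 := by
  set φ : ℝ → ℝ := fun t => r (x + t • v) - t * ⟪gradient r x, v⟫ - L * t ^ 2 / 2 * ‖v‖ ^ 2 with hφ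
  have hline : ∀ t : ℝ, HasDerivAt (fun s : ℝ => x + s • v) v t := by
    intro t
    simpa using (HasDerivAt.const_add x ((hasDerivAt_id t).smul_const v))
  have hrd : ∀ t : ℝ, HasDerivAt (fun s : ℝ => r (x + s • v))
      ⟪gradient r (x + t • v), v⟫ t := by
    intro t
    have := ((hr (x + t • v)).hasGradientAt.hasFDerivAt).comp_hasDerivAt t (hline t)
    exact this
  have hφd : ∀ t : ℝ, HasDerivAt φ
      (⟪gradient r (x + t • v), v⟫ - ⟪gradient r x, v⟫ - L * t * ‖v‖ ^ 2) t := by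
    intro t
    have h1 : HasDerivAt (fun t : ℝ => t * ⟪gradient r x, v⟫) ⟪gradient r x, v⟫ t := by
      simpa using (hasDerivAt_id t).mul_const _
    have h2 : HasDerivAt (fun t : ℝ => L * t ^ 2 / 2 * ‖v‖ ^ 2) (L * t * ‖v‖ ^ 2) t := by
      have : HasDerivAt (fun t : ℝ => t ^ 2) (2 * t) t := by
        simpa using hasDerivAt_pow 2 t
      have := ((this.const_mul L).div_const 2).mul_const (‖v‖ ^ 2)
      exact this.congr_deriv (by ring)
    exact ((hrd t).sub h1).sub h2
  have hanti : AntitoneOn φ (Set.Icc 0 1) := by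
    apply antitoneOn_of_deriv_nonpos (convex_Icc 0 1)
    · exact Continuous.continuousOn (by
        have := hr.continuous; rw [hφ]; fun_prop)
    · intro t ht
      exact (hφd t).differentiableAt.differentiableWithinAt
    · intro t ht
      rw [interior_Icc] at ht
      rw [(hφd t).deriv]
      have hb : ⟪gradient r (x + t • v) - gradient r x, v⟫ ≤ L * t * ‖v‖ ^ 2 := by
        calc ⟪gradient r (x + t • v) - gradient r x, v⟫
            ≤ ‖gradient r (x + t • v) - gradient r x‖ * ‖v‖ :=
              real_inner_le_norm _ _
          _ ≤ (L * ‖(x + t • v) - x‖) * ‖v‖ := by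
              gcongr; exact hlip _ _
          _ = L * t * ‖v‖ ^ 2 := by
              simp [norm_smul, abs_of_pos ht.1]; ring
      rw [inner_sub_left] at hb
      linarith
  have h01 := hanti (Set.mem_Icc.2 ⟨le_refl 0, zero_le_one⟩)
      (Set.mem_Icc.2 ⟨zero_le_one, le_refl 1⟩) zero_le_one
  simp only [hφ, one_smul, zero_smul, add_zero, one_mul, one_pow, zero_pow] at h01
  simp at h01 ⊢
  linarith

set_option maxHeartbeats 1000000 in
/-- Per-step retain-loss inequality from the proof of Theorem 1: if `∇r` is
`L_r`-Lipschitz, `‖∇r(θ)‖ ≤ C` at a point `θ` with `∇f(θ) ≠ 0`, and `0 < η ≤ 1/L_r`,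
then `r(θ − η·u(θ)) − r(θ) ≤ −(η/2)‖u(θ)‖² + η·(γ²‖∇f(θ)‖² + Cγ‖∇f(θ)‖)`. -/
theorem blur_retain_descent (d : ℕ) (hd : 0 < d) (f r : EuclideanSpace ℝ (Fin d) → ℝ)
    (hf : Differentiable ℝ f) (hr : Differentiable ℝ r) (γ : ℝ) (hγ : 0 < γ)
    (Lr : ℝ) (hLr : 0 < Lr)
    (hlipr : ∀ x y : EuclideanSpace ℝ (Fin d),
      ‖gradient r x - gradient r y‖ ≤ Lr * ‖x - y‖)
    (C : ℝ) (hC : 0 < C)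
    (θ : EuclideanSpace ℝ (Fin d)) (hθ : gradient f θ ≠ 0)
    (hgr : ‖gradient r θ‖ ≤ C)
    (η : ℝ) (hη : 0 < η) (hηLr : η ≤ 1 / Lr) :
    r (θ - η • blurU f r γ θ) - r θ ≤
      -(η / 2) * ‖blurU f r γ θ‖ ^ 2 +
        η * (γ ^ 2 * ‖gradient f θ‖ ^ 2 + C * γ * ‖gradient f θ‖) := by
  set u := blurU f r γ θ with hu
  set gf := gradient f θ with hgf
  set gr := gradient r θ with hgr'
  have hdesc := descent_aux_s8 r hr Lr hLr.le hlipr θ (-(η • u))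
  have hpt : θ + -(η • u) = θ - η • u := by abel
  rw [hpt] at hdesc
  have hinner : ⟪gr, -(η • u)⟫ = -(η * ⟪gr, u⟫) := by
    rw [inner_neg_right, real_inner_smul_right]
  have hnorm : ‖-(η • u)‖ ^ 2 = η ^ 2 * ‖u‖ ^ 2 := by
    rw [norm_neg, norm_smul]
    simp [abs_of_pos hη]; ring
  rw [hinner, hnorm] at hdesc
  -- quadratic term bound: Lr/2 * η² ≤ η/2
  have hηLr' : Lr * η ≤ 1 := by
    rw [le_div_iff₀ hLr] at hηLr; linarith
  have hquad : Lr / 2 * (η ^ 2 * ‖u‖ ^ 2) ≤ η / 2 * ‖u‖ ^ 2 := by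
    have : Lr * η ^ 2 ≤ η := by nlinarith
    nlinarith [sq_nonneg ‖u‖]
  -- key identity: ‖u‖² - ⟪gr, u⟫ = (γ - c) * γ * ‖gf‖²
  have hgfne : ‖gf‖ ≠ 0 := norm_ne_zero_iff.2 hθ
  set c : ℝ := ⟪gf, gr⟫ / ‖gf‖ ^ 2 with hc
  have hcgf : c * ‖gf‖ ^ 2 = ⟪gf, gr⟫ := by
    rw [hc]; field_simp
  have hudef : u = (γ - c) • gf + gr := by
    rw [hu, blurU, ← hgf, ← hgr', ← hc, sub_smul]
    abel
  have hfu : ⟪gf, u⟫ = γ * ‖gf‖ ^ 2 := by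
    rw [hudef, inner_add_right, real_inner_smul_right, real_inner_self_eq_norm_sq]
    nlinarith [hcgf]
  have hkey : ‖u‖ ^ 2 - ⟪gr, u⟫ = (γ - c) * (γ * ‖gf‖ ^ 2) := by
    have : ‖u‖ ^ 2 - ⟪gr, u⟫ = ⟪u - gr, u⟫ := by
      rw [inner_sub_left, real_inner_self_eq_norm_sq]
    rw [this]
    have : u - gr = (γ - c) • gf := by rw [hudef, add_sub_cancel_right]
    rw [this, real_inner_smul_left, hfu]
  have hcs : -⟪gf, gr⟫ ≤ C * ‖gf‖ := by
    have h1 : -⟪gf, gr⟫ ≤ ‖gf‖ * ‖gr‖ := by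
      have h2 := abs_real_inner_le_norm gf gr
      have h3 := neg_le_abs ⟪gf, gr⟫
      linarith
    calc -⟪gf, gr⟫ ≤ ‖gf‖ * ‖gr‖ := h1
      _ ≤ ‖gf‖ * C := mul_le_mul_of_nonneg_left hgr (norm_nonneg _)
      _ = C * ‖gf‖ := by ring
  have hkey2 : ‖u‖ ^ 2 - ⟪gr, u⟫ ≤ γ ^ 2 * ‖gf‖ ^ 2 + C * γ * ‖gf‖ := by
    rw [hkey]
    have : (γ - c) * (γ * ‖gf‖ ^ 2) = γ ^ 2 * ‖gf‖ ^ 2 + γ * (-⟪gf, gr⟫) := by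
      nlinarith [hcgf]
    rw [this]
    nlinarith [hcs]
  nlinarith [hdesc, hquad, hkey2]
end

section
/- Under Assumption 1 and along the BLUR iterates, for every positive integer T and every step size η > 0, the temporal average of the squared forget-gradient norm satisfies (1/T)·Σ_{t=0}^{T−1} ‖∇f(θ(t))‖² ≤ 2C/(T·η·γ) + (L_f/(2γ))·η·C₁². -/
open scoped RealInnerProductSpace

/-- Descent lemma: if `∇f` is `L`-Lipschitz then
`f(x+v) ≤ f(x) + ⟪∇f(x), v⟫ + (L/2)‖v‖²`. -/
lemma blur_descent {d : ℕ} (f : EuclideanSpace ℝ (Fin d) → ℝ) (hf : Differentiable ℝ f)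
    (L : ℝ) (hL : 0 ≤ L)
    (hlip : ∀ x y : EuclideanSpace ℝ (Fin d),
      ‖gradient f x - gradient f y‖ ≤ L * ‖x - y‖)
    (x v : EuclideanSpace ℝ (Fin d)) :
    f (x + v) ≤ f x + ⟪gradient f x, v⟫ + L / 2 * ‖v‖ ^ 2 := by
  have hgcont : Continuous (gradient f) := by
    have hl : LipschitzWith (Real.toNNReal L) (gradient f) := by
      apply LipschitzWith.of_dist_le_mul
      intro a b
      simpa [dist_eq_norm, Real.coe_toNNReal L hL] using hlip a b
    exact hl.continuous
  have hline : ∀ t : ℝ, HasDerivAt (fun s : ℝ => x + s • v) v t := by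
    intro t
    simpa using ((hasDerivAt_id t).smul_const v).const_add x
  have hg : ∀ t : ℝ, HasDerivAt (fun s : ℝ => f (x + s • v))
      ⟪gradient f (x + t • v), v⟫ t := by
    intro t
    have h1 : HasFDerivAt f
        ((InnerProductSpace.toDual ℝ _) (gradient f (x + t • v))) (x + t • v) :=
      (hf _).hasGradientAt.hasFDerivAt
    exact h1.comp_hasDerivAt t (hline t)
  have hcont : Continuous fun t : ℝ => ⟪gradient f (x + t • v), v⟫ := by
    apply Continuous.inner _ continuous_const
    exact hgcont.comp (by continuity)
  have hFTC : (∫ t in (0:ℝ)..1, ⟪gradient f (x + t • v), v⟫) = f (x + v) - f x := by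
    have := intervalIntegral.integral_eq_sub_of_hasDerivAt
      (f := fun s : ℝ => f (x + s • v))
      (f' := fun t : ℝ => ⟪gradient f (x + t • v), v⟫)
      (fun t _ => hg t) (hcont.intervalIntegrable 0 1)
    simpa using this
  have hint2 : (∫ t in (0:ℝ)..1, L * t * ‖v‖ ^ 2) = L / 2 * ‖v‖ ^ 2 := by
    have h : (∫ t in (0:ℝ)..1, L * t * ‖v‖ ^ 2)
        = (L * ‖v‖ ^ 2) * ∫ t in (0:ℝ)..1, t := by
      rw [← intervalIntegral.integral_const_mul]
      congr 1; ext t; ring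
    rw [h, integral_id]; ring
  have hmono : (∫ t in (0:ℝ)..1, (⟪gradient f (x + t • v), v⟫ - ⟪gradient f x, v⟫))
      ≤ ∫ t in (0:ℝ)..1, L * t * ‖v‖ ^ 2 := by
    apply intervalIntegral.integral_mono_on (by norm_num)
    · exact (hcont.sub continuous_const).intervalIntegrable 0 1
    · exact (by continuity : Continuous fun t : ℝ => L * t * ‖v‖ ^ 2).intervalIntegrable 0 1
    · intro t ht
      obtain ⟨ht0, ht1⟩ := ht
      have h1 : ⟪gradient f (x + t • v), v⟫ - ⟪gradient f x, v⟫
          = ⟪gradient f (x + t • v) - gradient f x, v⟫ := by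
        rw [inner_sub_left]
      rw [h1]
      calc ⟪gradient f (x + t • v) - gradient f x, v⟫
          ≤ ‖gradient f (x + t • v) - gradient f x‖ * ‖v‖ := real_inner_le_norm _ _
        _ ≤ (L * ‖x + t • v - x‖) * ‖v‖ := by
            apply mul_le_mul_of_nonneg_right (hlip _ _) (norm_nonneg _)
        _ = L * t * ‖v‖ ^ 2 := by
            have : x + t • v - x = t • v := by abel
            rw [this, norm_smul, Real.norm_eq_abs, abs_of_nonneg ht0]; ring
  have hsub : (∫ t in (0:ℝ)..1, (⟪gradient f (x + t • v), v⟫ - ⟪gradient f x, v⟫))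
      = f (x + v) - f x - ⟪gradient f x, v⟫ := by
    rw [intervalIntegral.integral_sub (hcont.intervalIntegrable 0 1)
      (intervalIntegrable_const), hFTC]
    simp
  rw [hsub, hint2] at hmono
  linarith

/-- First claim of Theorem 1: under Assumption 1 and along the BLUR iterates, for every
positive integer `T` and step size `η > 0`,
`(1/T)·Σ_{t<T} ‖∇f(θ(t))‖² ≤ 2C/(Tηγ) + (L_f/(2γ))·η·C₁²` with `C₁ = (2+γ)C`. -/
theorem blur_avg_forget_grad_sq (d : ℕ) (hd : 0 < d) (f r : EuclideanSpace ℝ (Fin d) → ℝ)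
    (hf : Differentiable ℝ f) (hr : Differentiable ℝ r) (γ : ℝ) (hγ : 0 < γ)
    (Lf Lr : ℝ) (hLf : 0 < Lf) (hLr : 0 < Lr)
    (hlipf : ∀ x y : EuclideanSpace ℝ (Fin d),
      ‖gradient f x - gradient f y‖ ≤ Lf * ‖x - y‖)
    (hlipr : ∀ x y : EuclideanSpace ℝ (Fin d),
      ‖gradient r x - gradient r y‖ ≤ Lr * ‖x - y‖)
    (C : ℝ) (hC : 0 < C)
    (hfb : ∀ x, |f x| ≤ C) (hrb : ∀ x, |r x| ≤ C)
    (hgf : ∀ x, ‖gradient f x‖ ≤ C) (hgr : ∀ x, ‖gradient r x‖ ≤ C)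
    (η : ℝ)
    (θs : ℕ → EuclideanSpace ℝ (Fin d))
    (hne : ∀ t, gradient f (θs t) ≠ 0)
    (hstep : ∀ t, θs (t + 1) = θs t - η • blurU f r γ (θs t))
    (T : ℕ) (hT : 0 < T)
    (hη : 0 < η) :
    (1 / (T : ℝ)) * ∑ t ∈ Finset.range T, ‖gradient f (θs t)‖ ^ 2 ≤
      2 * C / ((T : ℝ) * η * γ) + Lf / (2 * γ) * η * ((2 + γ) * C) ^ 2 := by
  set C₁ : ℝ := (2 + γ) * C with hC₁
  -- inner product identity
  have hinner : ∀ t, ⟪gradient f (θs t), blurU f r γ (θs t)⟫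
      = γ * ‖gradient f (θs t)‖ ^ 2 := by
    intro t
    have hn : ‖gradient f (θs t)‖ ^ 2 ≠ 0 :=
      pow_ne_zero _ (norm_ne_zero_iff.mpr (hne t))
    simp only [blurU, inner_add_right, inner_sub_right, inner_smul_right,
      real_inner_self_eq_norm_sq]
    field_simp
    rw [mul_div_cancel_left₀ _ (norm_ne_zero_iff.mpr (hne t))]; ring
  -- norm bound on the update
  have hub : ∀ t, ‖blurU f r γ (θs t)‖ ≤ C₁ := by
    intro t
    set g := gradient f (θs t)
    set w := gradient r (θs t)
    have hng : 0 < ‖g‖ := norm_pos_iff.mpr (hne t)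
    have h3 : ‖(⟪g, w⟫ / ‖g‖ ^ 2) • g‖ ≤ ‖w‖ := by
      rw [norm_smul, Real.norm_eq_abs, abs_div, abs_of_nonneg (by positivity : (0:ℝ) ≤ ‖g‖ ^ 2)]
      have hcs : |⟪g, w⟫| ≤ ‖g‖ * ‖w‖ := abs_real_inner_le_norm g w
      rw [div_mul_eq_mul_div, div_le_iff₀ (by positivity)]
      calc |⟪g, w⟫| * ‖g‖ ≤ (‖g‖ * ‖w‖) * ‖g‖ := by
            exact mul_le_mul_of_nonneg_right hcs (norm_nonneg _)
        _ = ‖w‖ * ‖g‖ ^ 2 := by ring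
    calc ‖blurU f r γ (θs t)‖
        ≤ ‖γ • g + w‖ + ‖(⟪g, w⟫ / ‖g‖ ^ 2) • g‖ := norm_sub_le _ _
      _ ≤ (‖γ • g‖ + ‖w‖) + ‖w‖ := by
          have := norm_add_le (γ • g) w
          linarith
      _ = γ * ‖g‖ + ‖w‖ + ‖w‖ := by
          rw [norm_smul, Real.norm_eq_abs, abs_of_pos hγ]
      _ ≤ γ * C + C + C := by
          have h1 : γ * ‖g‖ ≤ γ * C := mul_le_mul_of_nonneg_left (hgf _) hγ.le
          have h2 := hgr (θs t)
          linarith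
      _ = C₁ := by rw [hC₁]; ring
  -- per-step descent
  have hdesc : ∀ t, η * γ * ‖gradient f (θs t)‖ ^ 2
      ≤ f (θs t) - f (θs (t + 1)) + Lf / 2 * η ^ 2 * C₁ ^ 2 := by
    intro t
    have hd := blur_descent f hf Lf hLf.le hlipf (θs t) (-(η • blurU f r γ (θs t)))
    have hx : θs t + -(η • blurU f r γ (θs t)) = θs (t + 1) := by
      rw [hstep t]; abel
    rw [hx] at hd
    have hi : ⟪gradient f (θs t), -(η • blurU f r γ (θs t))⟫
        = -(η * (γ * ‖gradient f (θs t)‖ ^ 2)) := by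
      rw [inner_neg_right, real_inner_smul_right, hinner t]
    have hn2 : ‖-(η • blurU f r γ (θs t))‖ ^ 2 ≤ η ^ 2 * C₁ ^ 2 := by
      rw [norm_neg, norm_smul, Real.norm_eq_abs, abs_of_pos hη, mul_pow]
      have h0 : (0:ℝ) ≤ ‖blurU f r γ (θs t)‖ := norm_nonneg _
      have hsq : ‖blurU f r γ (θs t)‖ ^ 2 ≤ C₁ ^ 2 := pow_le_pow_left₀ h0 (hub t) 2
      exact mul_le_mul_of_nonneg_left hsq (sq_nonneg η)
    rw [hi] at hd
    nlinarith [hd, hn2, sq_nonneg η]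
  -- telescoping sum
  have hsum : ∑ t ∈ Finset.range T, (η * γ * ‖gradient f (θs t)‖ ^ 2)
      ≤ ∑ t ∈ Finset.range T, (f (θs t) - f (θs (t + 1)) + Lf / 2 * η ^ 2 * C₁ ^ 2) :=
    Finset.sum_le_sum fun t _ => hdesc t
  rw [Finset.sum_add_distrib, Finset.sum_range_sub' (fun t => f (θs t)),
    Finset.sum_const, ← Finset.mul_sum] at hsum
  have hf0 : f (θs 0) - f (θs T) ≤ 2 * C := by
    have h1 := abs_le.mp (hfb (θs 0))
    have h2 := abs_le.mp (hfb (θs T))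
    linarith [h1.2, h2.1]
  have hTpos : (0:ℝ) < T := Nat.cast_pos.mpr hT
  have hkey : η * γ * ∑ t ∈ Finset.range T, ‖gradient f (θs t)‖ ^ 2
      ≤ 2 * C + (T : ℝ) * (Lf / 2 * η ^ 2 * C₁ ^ 2) := by
    simp only [Finset.card_range, nsmul_eq_mul] at hsum
    linarith
  rw [one_div, inv_mul_le_iff₀ hTpos]
  have hrhs : (T:ℝ) * (2 * C / ((T : ℝ) * η * γ) + Lf / (2 * γ) * η * C₁ ^ 2)
      = (2 * C + (T : ℝ) * (Lf / 2 * η ^ 2 * C₁ ^ 2)) / (η * γ) := by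
    field_simp
  rw [hrhs, le_div_iff₀ (by positivity)]
  linarith [hkey]
end
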